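/- Let G be a finite simple graph with clique partition π = {W₁,…,W_r}. For each vertex v of G let i(v) be the index with v ∈ W_{i(v)}. Then the map sending an independent set A of G^π to A defines a bijection between the maximal independent sets of G^π and the sets of the form D ∪ {wᵢ : no vertex of Wᵢ lies in D}, where D ranges over the independent sets of G; in particular, the number of maximal independent sets of G^π equals the number of independent sets of G. -/

import Mathlib

/-
A maximal independent set `A` of `G^π` is determined by its trace `D = A ∩ V(G)`, which is
independent in `G`: a whisker `wᵢ` can be added to `A` exactly when `Wᵢ` misses `D`, so maximality
forces `A = D ∪ {wᵢ : Wᵢ ∩ D = ∅}`. Conversely this set is maximal, because a vertex `v ∉ D` is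
blocked either by `w_{i(v)}` or, since `W_{i(v)}` is a clique, by the vertex of `D` in `W_{i(v)}`.
-/

def cliqueWhisker {V ι : Type*} (G : SimpleGraph V) (p : V → ι) :
    SimpleGraph (V ⊕ ι) :=
  SimpleGraph.fromRel (fun a b =>
    match a, b with
    | Sum.inl u, Sum.inl v => G.Adj u v
    | Sum.inl u, Sum.inr i => p u = i
    | _, _ => False)

def whiskerGraph {V : Type*} (G : SimpleGraph V) : SimpleGraph (V ⊕ V) :=
  SimpleGraph.fromRel (fun a b =>
    match a, b with
    | Sum.inl u, Sum.inl v => G.Adj u v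
    | Sum.inl u, Sum.inr w => u = w
    | _, _ => False)

def IsVertexCover {V : Type*} (G : SimpleGraph V) (C : Set V) : Prop :=
  ∀ ⦃u v : V⦄, G.Adj u v → u ∈ C ∨ v ∈ C

def IsMinVertexCover {V : Type*} (G : SimpleGraph V) (C : Set V) : Prop :=
  IsVertexCover G C ∧ ∀ D ⊆ C, IsVertexCover G D → D = C

def IsIndep {V : Type*} (G : SimpleGraph V) (A : Set V) : Prop :=
  ∀ u ∈ A, ∀ v ∈ A, ¬ G.Adj u v

def IsMaximalIndep {V : Type*} (G : SimpleGraph V) (A : Set V) : Prop :=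
  IsIndep G A ∧ ∀ B, IsIndep G B → A ⊆ B → A = B

def whiskerCompletion {V ι : Type*} (p : V → ι) (D : Set V) : Set (V ⊕ ι) :=
  Sum.inl '' D ∪ Sum.inr '' {i | ∀ v, p v = i → v ∉ D}

section CliqueWhisker

variable {V ι : Type*} (G : SimpleGraph V) (p : V → ι)

@[simp]
lemma cliqueWhisker_adj_inl_inl (u v : V) :
    (cliqueWhisker G p).Adj (.inl u) (.inl v) ↔ G.Adj u v := by
  simp only [cliqueWhisker, SimpleGraph.fromRel_adj, ne_eq, Sum.inl.injEq]
  exact ⟨fun ⟨_, h⟩ => h.elim id G.adj_symm, fun h => ⟨h.ne, .inl h⟩⟩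

@[simp]
lemma cliqueWhisker_adj_inl_inr (u : V) (i : ι) :
    (cliqueWhisker G p).Adj (.inl u) (.inr i) ↔ p u = i := by
  simp [cliqueWhisker]

@[simp]
lemma cliqueWhisker_not_adj_inr_inr (i j : ι) :
    ¬ (cliqueWhisker G p).Adj (.inr i) (.inr j) := by
  simp [cliqueWhisker]

@[simp]
lemma inl_mem_whiskerCompletion {D : Set V} {v : V} :
    (.inl v : V ⊕ ι) ∈ whiskerCompletion p D ↔ v ∈ D := by
  simp [whiskerCompletion]

@[simp]
lemma inr_mem_whiskerCompletion {D : Set V} {i : ι} :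
    .inr i ∈ whiskerCompletion p D ↔ ∀ v, p v = i → v ∉ D := by
  simp [whiskerCompletion]

lemma whiskerCompletion_injective : Function.Injective (whiskerCompletion p) := by
  intro D₁ D₂ h
  ext v
  simpa using Set.ext_iff.mp h (.inl v)

variable {G p}

lemma IsIndep.preimage_inl {A : Set (V ⊕ ι)} (hA : IsIndep (cliqueWhisker G p) A) :
    IsIndep G (Sum.inl ⁻¹' A) := fun u hu v hv huv =>
  hA _ hu _ hv ((cliqueWhisker_adj_inl_inl G p u v).mpr huv)

lemma IsIndep.subset_whiskerCompletion {A : Set (V ⊕ ι)} (hA : IsIndep (cliqueWhisker G p) A) :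
    A ⊆ whiskerCompletion p (Sum.inl ⁻¹' A) := by
  rintro (v | i) hx
  · simpa using hx
  · rw [inr_mem_whiskerCompletion]
    intro v hpv hv
    exact hA _ hv _ hx ((cliqueWhisker_adj_inl_inr G p v i).mpr hpv)

lemma IsIndep.isIndep_whiskerCompletion {D : Set V} (hD : IsIndep G D) :
    IsIndep (cliqueWhisker G p) (whiskerCompletion p D) := by
  rintro (u | i) hu (v | j) hv huv
  · exact hD u (by simpa using hu) v (by simpa using hv) (by simpa using huv)
  · exact (inr_mem_whiskerCompletion p).mp hv u (by simpa using huv) (by simpa using hu)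
  · exact (inr_mem_whiskerCompletion p).mp hu v (by simpa using huv.symm) (by simpa using hv)
  · exact cliqueWhisker_not_adj_inr_inr G p i j huv

lemma IsIndep.isMaximalIndep_whiskerCompletion
    (hclique : ∀ u v : V, p u = p v → u ≠ v → G.Adj u v) {D : Set V} (hD : IsIndep G D) :
    IsMaximalIndep (cliqueWhisker G p) (whiskerCompletion p D) := by
  refine ⟨hD.isIndep_whiskerCompletion, fun B hB hsub => hsub.antisymm ?_⟩
  rintro (v | i) hx
  · rw [inl_mem_whiskerCompletion]
    by_contra hv
    by_cases hblock : ∃ u ∈ D, p u = p v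
    · obtain ⟨u, hu, hpu⟩ := hblock
      have hu' : .inl u ∈ B := hsub ((inl_mem_whiskerCompletion p).mpr hu)
      exact hB _ hu' _ hx ((cliqueWhisker_adj_inl_inl G p u v).mpr
        (hclique u v hpu (ne_of_mem_of_not_mem hu hv)))
    · have hw : .inr (p v) ∈ B := hsub ((inr_mem_whiskerCompletion p).mpr
        fun u hpu hu => hblock ⟨u, hu, hpu⟩)
      exact hB _ hx _ hw ((cliqueWhisker_adj_inl_inr G p v (p v)).mpr rfl)
  · rw [inr_mem_whiskerCompletion]
    intro v hpv hv
    have hv' : .inl v ∈ B := hsub ((inl_mem_whiskerCompletion p).mpr hv)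
    exact hB _ hv' _ hx ((cliqueWhisker_adj_inl_inr G p v i).mpr hpv)

theorem isMaximalIndep_cliqueWhisker_iff
    (hclique : ∀ u v : V, p u = p v → u ≠ v → G.Adj u v) (A : Set (V ⊕ ι)) :
    IsMaximalIndep (cliqueWhisker G p) A ↔
      ∃ D : Set V, IsIndep G D ∧ A = whiskerCompletion p D := by
  constructor
  · rintro ⟨hA, hmax⟩
    exact ⟨_, hA.preimage_inl,
      hmax _ hA.preimage_inl.isIndep_whiskerCompletion hA.subset_whiskerCompletion⟩
  · rintro ⟨D, hD, rfl⟩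
    exact hD.isMaximalIndep_whiskerCompletion hclique

end CliqueWhisker

theorem stmt19_general {V : Type*} {r : ℕ} (G : SimpleGraph V) (p : V → Fin r)
    (hclique : ∀ u v : V, p u = p v → u ≠ v → G.Adj u v) :
    (∀ A : Set (V ⊕ Fin r),
      (IsIndep (cliqueWhisker G p) A ∧
          ∀ B, IsIndep (cliqueWhisker G p) B → A ⊆ B → A = B) ↔
        ∃ D : Set V, IsIndep G D ∧
          A = (Sum.inl '' D) ∪ (Sum.inr '' {i : Fin r | ∀ v, p v = i → v ∉ D})) ∧
    Nat.card {A : Set (V ⊕ Fin r) //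
        IsIndep (cliqueWhisker G p) A ∧
          ∀ B, IsIndep (cliqueWhisker G p) B → A ⊆ B → A = B} =
      Nat.card {D : Set V // IsIndep G D} := by
  refine ⟨isMaximalIndep_cliqueWhisker_iff hclique, ?_⟩
  let f (D : {D : Set V // IsIndep G D}) : {A // IsMaximalIndep (cliqueWhisker G p) A} :=
    ⟨whiskerCompletion p D, D.2.isMaximalIndep_whiskerCompletion hclique⟩
  have hf : f.Bijective := by
    refine ⟨fun D₁ D₂ h => Subtype.ext (whiskerCompletion_injective p (congrArg Subtype.val h)), ?_⟩
    rintro ⟨A, hA⟩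
    obtain ⟨D, hD, rfl⟩ := (isMaximalIndep_cliqueWhisker_iff hclique A).mp hA
    exact ⟨⟨D, hD⟩, rfl⟩
  exact (Nat.card_eq_of_bijective f hf).symm

theorem stmt19 {V : Type*} [Fintype V] {r : ℕ} (G : SimpleGraph V) (p : V → Fin r)
    (hclique : ∀ u v : V, p u = p v → u ≠ v → G.Adj u v)
    (hsurj : Function.Surjective p) :
    (∀ A : Set (V ⊕ Fin r),
      (IsIndep (cliqueWhisker G p) A ∧
          ∀ B, IsIndep (cliqueWhisker G p) B → A ⊆ B → A = B) ↔
        ∃ D : Set V, IsIndep G D ∧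
          A = (Sum.inl '' D) ∪ (Sum.inr '' {i : Fin r | ∀ v, p v = i → v ∉ D})) ∧
    Nat.card {A : Set (V ⊕ Fin r) //
        IsIndep (cliqueWhisker G p) A ∧
          ∀ B, IsIndep (cliqueWhisker G p) B → A ⊆ B → A = B} =
      Nat.card {D : Set V // IsIndep G D} :=
  stmt19_general G p hclique
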